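/- Fix β > 0 and an integer j ≥ 0, and set b = β(j+1)/2. Let γ = √X·e^{iΘ}, where X and Θ are independent, X has density x ↦ b·(1−x)^{b−1} on [0,1], and Θ is uniform on [0,2π). Then for all real s, t: E[ exp( t·Re γ + s·Im γ ) ] ≤ exp( (s² + t²) / (2·(1 + β(j+1))) ). -/

import Mathlib

/-!
Given `|γ|² = x`, averaging over the uniform angle turns `E[exp(t Re γ + s Im γ)]` into the
Bessel series `I₀(r√x) = ∑ₖ (r²x/4)ᵏ / (k!)²` with `r² = s² + t²`. Integrating term by term
against the `Beta(1, b)` density, whose moments are `k! / ((b+1)⋯(b+k)) ≤ k! / (b+1)ᵏ`, bounds the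
`k`-th term by `(r² / (4(b+1)))ᵏ / k!`; summing gives `exp(r² / (4(b+1)))`, and
`4(b+1) ≥ 2(1+2b) = 2(1+β(j+1))`.
-/

open MeasureTheory

/-- The expectation `E[F(γ)]` where `γ = √X e^{iΘ}`, `X` has density
`x ↦ b (1−x)^{b−1}` on `[0,1]` and `Θ` is uniform on `[0,2π)`, independent:
`∫₀¹ ∫₀^{2π} F(√x e^{iθ}) (b/(2π)) (1−x)^{b−1} dθ dx`. -/
noncomputable def verblunskyExp (b : ℝ) (F : ℂ → ℝ) : ℝ :=
  ∫ x in Set.Icc (0:ℝ) 1, ∫ θ in Set.Ico (0:ℝ) (2 * Real.pi),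
    F ((Real.sqrt x : ℂ) * Complex.exp (Complex.I * (θ : ℝ))) *
      (b / (2 * Real.pi) * (1 - x) ^ (b - 1))

open Real intervalIntegral Finset
open scoped Nat

/-- `besselSeries y = I₀(2√y)`. -/
noncomputable def besselSeries (y : ℝ) : ℝ := ∑' k : ℕ, y ^ k / (k !) ^ 2

theorem hasSum_pow_div_factorial_exp (x : ℝ) : HasSum (fun n : ℕ => x ^ n / n !) (exp x) :=
  exp_eq_exp_ℝ ▸ NormedSpace.expSeries_div_hasSum_exp x

theorem integral_zero_two_pi_cos_pow_add_two (n : ℕ) :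
    ∫ θ in (0 : ℝ)..2 * π, cos θ ^ (n + 2) =
      (n + 1) / (n + 2) * ∫ θ in (0 : ℝ)..2 * π, cos θ ^ n := by
  simp [integral_cos_pow]

theorem integral_zero_two_pi_cos_pow_odd (k : ℕ) :
    ∫ θ in (0 : ℝ)..2 * π, cos θ ^ (2 * k + 1) = 0 := by
  induction k with
  | zero => simp
  | succ k ih =>
    rw [show 2 * (k + 1) + 1 = 2 * k + 1 + 2 by ring, integral_zero_two_pi_cos_pow_add_two, ih,
      mul_zero]

theorem integral_zero_two_pi_cos_pow_even (k : ℕ) :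
    ∫ θ in (0 : ℝ)..2 * π, cos θ ^ (2 * k) = 2 * π * (2 * k)! / (4 ^ k * (k !) ^ 2) := by
  induction k with
  | zero => simp
  | succ k ih =>
    rw [show 2 * (k + 1) = 2 * k + 2 by ring, integral_zero_two_pi_cos_pow_add_two, ih]
    push_cast [Nat.factorial_succ]
    field_simp
    ring

theorem hasSum_integral_exp_mul_cos (a : ℝ) :
    HasSum (fun k : ℕ => 2 * π * (a ^ 2 / 4) ^ k / (k !) ^ 2)
      (∫ θ in (0 : ℝ)..2 * π, exp (a * cos θ)) := by
  have hseries : HasSum (fun n : ℕ => ∫ θ in (0 : ℝ)..2 * π, (a * cos θ) ^ n / n !)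
      (∫ θ in (0 : ℝ)..2 * π, exp (a * cos θ)) := by
    refine hasSum_integral_of_dominated_convergence (fun n _ => |a| ^ n / n !)
      (fun n => (by fun_prop : Continuous fun θ => (a * cos θ) ^ n / n !).aestronglyMeasurable)
      (fun n => ae_of_all _ fun θ _ => ?_) (ae_of_all _ fun _ _ => summable_pow_div_factorial _)
      intervalIntegrable_const (ae_of_all _ fun θ _ => hasSum_pow_div_factorial_exp _)
    rw [norm_div, norm_pow, norm_mul, Real.norm_natCast, norm_eq_abs, norm_eq_abs]
    gcongr
    exact mul_le_of_le_one_right (abs_nonneg a) (abs_cos_le_one θ)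
  have hterm (n : ℕ) : ∫ θ in (0 : ℝ)..2 * π, (a * cos θ) ^ n / n ! =
      a ^ n / n ! * ∫ θ in (0 : ℝ)..2 * π, cos θ ^ n := by
    rw [← intervalIntegral.integral_const_mul]
    congr with θ
    ring
  simp only [hterm] at hseries
  have hodd (n : ℕ) (hn : n ∉ Set.range (fun k : ℕ => 2 * k)) :
      a ^ n / n ! * ∫ θ in (0 : ℝ)..2 * π, cos θ ^ n = 0 := by
    obtain ⟨k, rfl⟩ : Odd n :=
      Nat.not_even_iff_odd.mp fun ⟨k, hk⟩ => hn ⟨k, show 2 * k = n by omega⟩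
    rw [integral_zero_two_pi_cos_pow_odd, mul_zero]
  convert (Function.Injective.hasSum_iff (fun _ _ h => by simpa using h) hodd).mpr hseries
    using 2 with k
  rw [Function.comp_apply, integral_zero_two_pi_cos_pow_even, div_pow, ← pow_mul]
  field_simp

theorem integral_comp_re_mul_exp_I {E : Type*} [NormedAddCommGroup E] [NormedSpace ℝ E]
    (f : ℝ → E) (z : ℂ) :
    ∫ θ in (0 : ℝ)..2 * π, f (z * Complex.exp (Complex.I * θ)).re =
      ∫ θ in (0 : ℝ)..2 * π, f (‖z‖ * cos θ) := by
  have hre (θ : ℝ) : (z * Complex.exp (Complex.I * θ)).re = ‖z‖ * cos (θ + z.arg) := by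
    conv_lhs => rw [← Complex.norm_mul_exp_arg_mul_I z]
    rw [mul_assoc, ← Complex.exp_add, Complex.re_ofReal_mul,
      show ↑z.arg * Complex.I + Complex.I * θ = ↑(θ + z.arg) * Complex.I by push_cast; ring,
      Complex.exp_ofReal_mul_I_re]
  have hper : Function.Periodic (fun θ => f (‖z‖ * cos θ)) (2 * π) := fun θ => by
    simp [cos_add_two_pi]
  simp only [hre]
  rw [integral_comp_add_right (fun θ => f (‖z‖ * cos θ)), zero_add, add_comm,
    hper.intervalIntegral_add_eq z.arg 0, zero_add]

theorem integral_exp_re_mul_exp_I (z : ℂ) :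
    ∫ θ in (0 : ℝ)..2 * π, exp (z * Complex.exp (Complex.I * θ)).re =
      2 * π * besselSeries (‖z‖ ^ 2 / 4) := by
  rw [integral_comp_re_mul_exp_I exp z, ← (hasSum_integral_exp_mul_cos ‖z‖).tsum_eq, besselSeries,
    ← tsum_mul_left]
  simp only [mul_div_assoc]

theorem intervalIntegrable_one_sub_rpow {r : ℝ} (hr : -1 < r) :
    IntervalIntegrable (fun x : ℝ => (1 - x) ^ r) volume 0 1 := by
  simpa using ((intervalIntegrable_rpow' (a := 0) (b := 1) hr).comp_sub_left 1).symm

theorem integral_pow_succ_mul_one_sub_rpow {b : ℝ} (hb : 0 < b) (k : ℕ) :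
    ∫ x in (0 : ℝ)..1, x ^ (k + 1) * (1 - x) ^ (b - 1) =
      (k + 1) / b * ∫ x in (0 : ℝ)..1, x ^ k * (1 - x) ^ b := by
  have hv (x : ℝ) (hx : x ∈ Set.Ioo (min 0 1) (max 0 1)) :
      HasDerivAt (fun y => -(1 - y) ^ b / b) ((1 - x) ^ (b - 1)) x := by
    have hx1 : 1 - x ≠ 0 :=
      sub_ne_zero.mpr (by linarith [hx.2, max_eq_right (zero_le_one' ℝ)] : x < 1).ne'
    refine ((((hasDerivAt_id' x).const_sub 1).rpow_const (Or.inl hx1)).neg.div_const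
      b).congr_deriv ?_
    field_simp
  rw [integral_mul_deriv_eq_deriv_mul_of_hasDerivAt (u' := fun x => (k + 1) * x ^ k)
      (v := fun x => -(1 - x) ^ b / b) (by fun_prop)
      (((continuousOn_const.sub continuousOn_id).rpow_const fun _ _ => Or.inr hb.le).neg.div_const
        b)
      (fun x _ => by simpa using hasDerivAt_pow (k + 1) x) hv
      (by apply Continuous.intervalIntegrable; fun_prop)
      (intervalIntegrable_one_sub_rpow (by linarith)),
    ← intervalIntegral.integral_const_mul]
  simp only [sub_self, zero_rpow hb.ne', zero_pow (Nat.succ_ne_zero k), neg_zero, zero_div,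
    mul_zero, zero_mul, sub_zero, zero_sub, ← intervalIntegral.integral_neg]
  congr with x
  ring

theorem integral_pow_mul_one_sub_rpow {b : ℝ} (hb : 0 < b) (k : ℕ) :
    ∫ x in (0 : ℝ)..1, x ^ k * (1 - x) ^ (b - 1) = k ! / ∏ i ∈ range (k + 1), (b + i) := by
  induction k generalizing b with
  | zero =>
    simp only [pow_zero, one_mul, integral_comp_sub_left fun x => x ^ (b - 1)]
    rw [integral_rpow (Or.inl (by linarith))]
    simp [hb.ne']
  | succ k ih =>
    have hprod : ∏ i ∈ range (k + 1 + 1), (b + i) = (∏ i ∈ range (k + 1), (b + 1 + i)) * b := by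
      rw [prod_range_succ']
      push_cast
      simp only [add_zero, add_right_comm b, add_assoc]
    rw [integral_pow_succ_mul_one_sub_rpow hb, ← add_sub_cancel_right b 1, ih (by linarith),
      add_sub_cancel_right, hprod, Nat.factorial_succ, Nat.cast_mul]
    push_cast
    field_simp

theorem mul_integral_pow_mul_one_sub_rpow_le {b : ℝ} (hb : 0 < b) (k : ℕ) :
    b * ∫ x in (0 : ℝ)..1, x ^ k * (1 - x) ^ (b - 1) ≤ k ! / (b + 1) ^ k := by
  have hprod : (b + 1) ^ k ≤ ∏ i ∈ range k, (b + (i + 1 : ℕ)) := calc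
    (b + 1) ^ k = ∏ _i ∈ range k, (b + 1) := by rw [prod_const, card_range]
    _ ≤ ∏ i ∈ range k, (b + (i + 1 : ℕ)) :=
      prod_le_prod (fun _ _ => by positivity) fun i _ => by
        push_cast; linarith [i.cast_nonneg' (α := ℝ)]
  rw [integral_pow_mul_one_sub_rpow hb, prod_range_succ', Nat.cast_zero, add_zero,
    mul_div_assoc', mul_comm _ b, ← div_div, mul_div_cancel_left₀ _ hb.ne']
  gcongr

theorem setIntegral_besselSeries_mul_le {b c : ℝ} (hb : 0 < b) (hc : 0 ≤ c) :
    ∫ x in Set.Icc (0 : ℝ) 1, besselSeries (c * x) * (b * (1 - x) ^ (b - 1)) ≤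
      exp (c / (b + 1)) := by
  set F : ℕ → ℝ → ℝ := fun k x => c ^ k / (k !) ^ 2 * b * (x ^ k * (1 - x) ^ (b - 1))
  have hF_nonneg (k : ℕ) (x : ℝ) (hx : x ∈ Set.Icc (0 : ℝ) 1) : 0 ≤ F k x := by
    have : 0 ≤ (1 - x) ^ (b - 1) := rpow_nonneg (by linarith [hx.2]) _
    have : 0 ≤ x := hx.1
    positivity
  have hF_int (k : ℕ) : IntegrableOn (F k) (Set.Icc 0 1) :=
    ((intervalIntegrable_iff_integrableOn_Icc_of_le zero_le_one).mp
      ((intervalIntegrable_one_sub_rpow (by linarith)).continuousOn_mul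
        (continuousOn_pow k))).const_mul _
  have hF_le (k : ℕ) : ∫ x in Set.Icc (0 : ℝ) 1, F k x ≤ (c / (b + 1)) ^ k / k ! := calc
    ∫ x in Set.Icc (0 : ℝ) 1, F k x
        = c ^ k / (k !) ^ 2 * (b * ∫ x in (0 : ℝ)..1, x ^ k * (1 - x) ^ (b - 1)) := by
      rw [MeasureTheory.integral_const_mul, integral_Icc_eq_integral_Ioc,
        ← intervalIntegral.integral_of_le zero_le_one, mul_assoc]
    _ ≤ c ^ k / (k !) ^ 2 * (k ! / (b + 1) ^ k) := by
      gcongr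
      exact mul_integral_pow_mul_one_sub_rpow_le hb k
    _ = (c / (b + 1)) ^ k / k ! := by
      rw [div_pow]
      field_simp
  have hF_norm (k : ℕ) : ∫ x in Set.Icc (0 : ℝ) 1, ‖F k x‖ = ∫ x in Set.Icc (0 : ℝ) 1, F k x :=
    setIntegral_congr_fun measurableSet_Icc fun x hx => norm_of_nonneg (hF_nonneg k x hx)
  have hsum := hasSum_integral_of_summable_integral_norm hF_int <| by
    simp only [hF_norm]
    exact (summable_pow_div_factorial _).of_nonneg_of_le
      (fun k => setIntegral_nonneg measurableSet_Icc (hF_nonneg k)) hF_le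
  have htsum (x : ℝ) : ∑' k, F k x = besselSeries (c * x) * (b * (1 - x) ^ (b - 1)) := by
    rw [besselSeries, ← tsum_mul_right]
    congr with k
    simp only [F]
    ring
  simp only [htsum] at hsum
  exact hasSum_le hF_le hsum (hasSum_pow_div_factorial_exp _)

theorem verblunskyExp_exp_re_mul_le {b : ℝ} (hb : 0 < b) (w : ℂ) :
    verblunskyExp b (fun γ => exp (w * γ).re) ≤ exp (‖w‖ ^ 2 / (4 * (b + 1))) := by
  have hangular (x : ℝ) (hx : x ∈ Set.Icc (0 : ℝ) 1) :
      ∫ θ in Set.Ico 0 (2 * π), exp (w * (√x * Complex.exp (Complex.I * θ))).re *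
          (b / (2 * π) * (1 - x) ^ (b - 1)) =
        besselSeries (‖w‖ ^ 2 / 4 * x) * (b * (1 - x) ^ (b - 1)) := by
    have hnorm : ‖w * √x‖ ^ 2 / 4 = ‖w‖ ^ 2 / 4 * x := by
      rw [norm_mul, Complex.norm_of_nonneg (sqrt_nonneg x), mul_pow, sq_sqrt hx.1]
      ring
    rw [MeasureTheory.integral_mul_const, integral_Ico_eq_integral_Ioc,
      ← integral_of_le two_pi_pos.le]
    simp only [← mul_assoc]
    rw [integral_exp_re_mul_exp_I, hnorm]
    field_simp
  unfold verblunskyExp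
  rw [setIntegral_congr_fun measurableSet_Icc hangular, ← div_div]
  exact setIntegral_besselSeries_mul_le hb (by positivity)

/-- Subgaussianity of a deformed Verblunsky coefficient `γ` of the CβE:
`E[exp(t Re γ + s Im γ)] ≤ exp((s²+t²)/(2(1+β(j+1))))` for all real `s, t`. -/
theorem verblunsky_subgaussian (β : ℝ) (hβ : 0 < β) (j : ℕ) (s t : ℝ) :
    verblunskyExp (β * (j + 1) / 2)
        (fun γ => Real.exp (t * γ.re + s * γ.im))
      ≤ Real.exp ((s ^ 2 + t ^ 2) / (2 * (1 + β * (j + 1)))) := by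
  set w : ℂ := ⟨t, -s⟩
  have hre (γ : ℂ) : (w * γ).re = t * γ.re + s * γ.im := by simp [w, Complex.mul_re]
  have hnorm : ‖w‖ ^ 2 = s ^ 2 + t ^ 2 := by
    rw [Complex.sq_norm, Complex.normSq_mk]
    ring
  calc verblunskyExp (β * (j + 1) / 2) (fun γ => exp (t * γ.re + s * γ.im))
      = verblunskyExp (β * (j + 1) / 2) (fun γ => exp (w * γ).re) := by simp only [hre]
    _ ≤ exp ((s ^ 2 + t ^ 2) / (4 * (β * (j + 1) / 2 + 1))) :=
      hnorm ▸ verblunskyExp_exp_re_mul_le (by positivity) w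
    _ ≤ exp ((s ^ 2 + t ^ 2) / (2 * (1 + β * (j + 1)))) :=
      exp_le_exp.mpr (div_le_div_of_nonneg_left (by positivity) (by positivity) (by linarith))
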